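/- arXiv:1105.4224 — 3 statements merged into one kernel-verified Lean document; each statement's English description precedes it below -/
import Mathlib

section
/- For any two intervals x = (x⁻, x⁺) and y = (y⁻, y⁺), exactly one of the 13 basic Allen relations holds between x and y; that is, the 13 Allen relations are jointly exhaustive and pairwise disjoint on the set of intervals. -/
/-- An interval: a pair (p, q) of real numbers with p < q. -/
def Intvl : Type := {x : ℝ × ℝ // x.1 < x.2}

/-- The 13 basic Allen (Interval Algebra) relations. -/
inductive Allen : Type
  | b | bi | m | mi | o | oi | s | si | d | di | f | fi | eq
  deriving DecidableEq

/-- Interpretation of the basic Allen relations. -/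
def Allen.holds : Allen → Intvl → Intvl → Prop
  | .b,  x, y => x.val.2 < y.val.1
  | .bi, x, y => y.val.2 < x.val.1
  | .m,  x, y => x.val.2 = y.val.1
  | .mi, x, y => y.val.2 = x.val.1
  | .o,  x, y => x.val.1 < y.val.1 ∧ y.val.1 < x.val.2 ∧ x.val.2 < y.val.2
  | .oi, x, y => y.val.1 < x.val.1 ∧ x.val.1 < y.val.2 ∧ y.val.2 < x.val.2
  | .s,  x, y => x.val.1 = y.val.1 ∧ x.val.2 < y.val.2
  | .si, x, y => y.val.1 = x.val.1 ∧ y.val.2 < x.val.2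
  | .d,  x, y => y.val.1 < x.val.1 ∧ x.val.2 < y.val.2
  | .di, x, y => x.val.1 < y.val.1 ∧ y.val.2 < x.val.2
  | .f,  x, y => y.val.1 < x.val.1 ∧ x.val.2 = y.val.2
  | .fi, x, y => x.val.1 < y.val.1 ∧ y.val.2 = x.val.2
  | .eq, x, y => x.val.1 = y.val.1 ∧ x.val.2 = y.val.2

namespace Allen

theorem exists_holds_of_lt_of_lt {x y : Intvl} (hyx : y.val.1 < x.val.2)
    (hxy : x.val.1 < y.val.2) : ∃ r : Allen, r.holds x y := by
  rcases lt_trichotomy x.val.1 y.val.1 with h₁ | h₁ | h₁ <;>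
    rcases lt_trichotomy x.val.2 y.val.2 with h₂ | h₂ | h₂
  exacts [⟨o, h₁, hyx, h₂⟩, ⟨fi, h₁, h₂.symm⟩, ⟨di, h₁, h₂⟩, ⟨s, h₁, h₂⟩, ⟨eq, h₁, h₂⟩,
    ⟨si, h₁.symm, h₂⟩, ⟨d, h₁, h₂⟩, ⟨f, h₁, h₂⟩, ⟨oi, h₁, hxy, h₂⟩]

theorem exists_holds (x y : Intvl) : ∃ r : Allen, r.holds x y := by
  rcases lt_trichotomy x.val.2 y.val.1 with h | h | hyx
  · exact ⟨b, h⟩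
  · exact ⟨m, h⟩
  rcases lt_trichotomy y.val.2 x.val.1 with h | h | hxy
  · exact ⟨bi, h⟩
  · exact ⟨mi, h⟩
  exact exists_holds_of_lt_of_lt hyx hxy

theorem eq_of_holds {r r' : Allen} {x y : Intvl} (h : r.holds x y) (h' : r'.holds x y) :
    r = r' := by
  have hx := x.property
  have hy := y.property
  -- each pair of distinct relations forces a contradictory order of the four endpoints
  cases r <;> cases r' <;> simp only [holds] at h h' <;> first | rfl | grind

end Allen

/-- the 13 basic Allen relations are jointly exhaustive and
pairwise disjoint: exactly one of them holds between any two intervals. -/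
theorem allen_JEPD (x y : Intvl) : ∃! r : Allen, r.holds x y :=
  let ⟨r, hr⟩ := Allen.exists_holds x y
  ⟨r, hr, fun _ hr' => Allen.eq_of_holds hr' hr⟩
end

section
/- For any intervals x, y, z there exist intervals x', y', z' whose endpoints are integers in {0, 1, 2, 3, 4, 5} such that the basic Allen relation holding between x' and y' is the same as that between x and y, the relation between y' and z' is the same as that between y and z, and the relation between x' and z' is the same as that between x and z. (In other words, the domain D₆ of intervals with integer endpoints in [0, 6) is 3-complete for the Interval Algebra.) -/
/-!
Only the relative order of the six endpoints matters for the three Allen relations. Replacing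
each endpoint by its rank (the number of endpoints strictly below it) preserves that order, and
the ranks of at most six reals are integers in {0, …, 5}.
-/

open Finset

/-- An interval belongs to the subdomain D_M: integer endpoints in [0, M). -/
def inD (M : ℤ) (x : Intvl) : Prop :=
  ∃ p q : ℤ, (0 ≤ p) ∧ (q < M) ∧ x.val.1 = (p : ℝ) ∧ x.val.2 = (q : ℝ)

section Rank

variable {α : Type*} [LinearOrder α] (s : Finset α)

def Finset.rankOf (t : α) : ℕ := #{u ∈ s | u < t}

theorem Finset.rankOf_strictMonoOn : StrictMonoOn s.rankOf s := by
  intro a ha b _ hab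
  refine card_lt_card ⟨fun u hu => ?_, fun hsub => ?_⟩
  · simp only [mem_filter] at hu ⊢
    exact ⟨hu.1, hu.2.trans hab⟩
  · exact lt_irrefl a (mem_filter.1 (hsub (mem_filter.2 ⟨ha, hab⟩))).2

theorem Finset.rankOf_lt_card {t : α} (ht : t ∈ s) : s.rankOf t < #s :=
  card_lt_card ⟨filter_subset _ s, fun hsub => lt_irrefl t (mem_filter.1 (hsub ht)).2⟩

end Rank

namespace Intvl

def EndpointsIn (s : Set ℝ) (x : Intvl) : Prop := x.val.1 ∈ s ∧ x.val.2 ∈ s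

def mapOn {f : ℝ → ℝ} {s : Set ℝ} (hf : StrictMonoOn f s) (x : Intvl) (hx : x.EndpointsIn s) :
    Intvl :=
  ⟨(f x.val.1, f x.val.2), hf hx.1 hx.2 x.property⟩

end Intvl

theorem Allen.holds_mapOn_iff {f : ℝ → ℝ} {s : Set ℝ} (hf : StrictMonoOn f s) {x y : Intvl}
    (hx : x.EndpointsIn s) (hy : y.EndpointsIn s) (r : Allen) :
    r.holds (x.mapOn hf hx) (y.mapOn hf hy) ↔ r.holds x y := by
  obtain ⟨hx₁, hx₂⟩ := hx
  obtain ⟨hy₁, hy₂⟩ := hy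
  cases r <;>
    simp only [Allen.holds, Intvl.mapOn, hf.lt_iff_lt, hf.injOn.eq_iff, *]

theorem inD_mapOn_rankOf {s : Finset ℝ} {M : ℤ} (hs : (#s : ℤ) ≤ M)
    (hf : StrictMonoOn (fun t => (s.rankOf t : ℝ)) s) {x : Intvl} (hx : x.EndpointsIn s) :
    inD M (x.mapOn hf hx) := by
  have hlt := s.rankOf_lt_card hx.2
  exact ⟨s.rankOf x.val.1, s.rankOf x.val.2, by positivity, by omega, by simp [Intvl.mapOn],
    by simp [Intvl.mapOn]⟩

/-- the subdomain D₆ of intervals with integer endpoints in [0, 6)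
is 3-complete for the Interval Algebra. -/
theorem D6_three_complete (x y z : Intvl) :
    ∃ x' y' z' : Intvl, inD 6 x' ∧ inD 6 y' ∧ inD 6 z' ∧
      (∀ r : Allen,
        (r.holds x y ↔ r.holds x' y') ∧
        (r.holds y z ↔ r.holds y' z') ∧
        (r.holds x z ↔ r.holds x' z')) := by
  classical
  set s : Finset ℝ := {x.val.1, x.val.2, y.val.1, y.val.2, z.val.1, z.val.2}
  have hs : (#s : ℤ) ≤ 6 := by exact_mod_cast card_le_six
  have hf : StrictMonoOn (fun t => (s.rankOf t : ℝ)) s :=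
    Nat.strictMono_cast.comp_strictMonoOn s.rankOf_strictMonoOn
  have hx : x.EndpointsIn s := by simp [Intvl.EndpointsIn, s]
  have hy : y.EndpointsIn s := by simp [Intvl.EndpointsIn, s]
  have hz : z.EndpointsIn s := by simp [Intvl.EndpointsIn, s]
  exact ⟨x.mapOn hf hx, y.mapOn hf hy, z.mapOn hf hz, inD_mapOn_rankOf hs hf hx,
    inD_mapOn_rankOf hs hf hy, inD_mapOn_rankOf hs hf hz, fun r =>
      ⟨(Allen.holds_mapOn_iff hf hx hy r).symm, (Allen.holds_mapOn_iff hf hy hz r).symm,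
        (Allen.holds_mapOn_iff hf hx hz r).symm⟩⟩
end

section
/- For any two regions a, b (nonempty, bounded, regular closed subsets of ℝ²), exactly one of the 8 basic RCC-8 relations DC, EC, PO, TPP, NTPP, EQ, TPPi, NTPPi holds between a and b; that is, the 8 RCC-8 relations are jointly exhaustive and pairwise disjoint on the set of regions. -/
/-!
Exhaustiveness is a decision tree. Disjointness is propositional once two facts about regions
are known: a region has nonempty interior, so containment forces the interiors to meet; and a
region is never inside its own interior, since it would then be clopen, nonempty and bounded in
the connected plane, which rules out `a ⊆ int b` together with `b ⊆ a`.
-/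

/-- A region: a nonempty, bounded, regular closed subset of the plane. -/
def Region : Type :=
  {a : Set (ℝ × ℝ) // a.Nonempty ∧ Bornology.IsBounded a ∧ a = closure (interior a)}

/-- The 8 basic RCC-8 relations. -/
inductive RCC8 : Type
  | DC | EC | PO | TPP | NTPP | EQ | TPPi | NTPPi
  deriving DecidableEq

/-- Interpretation of the basic RCC-8 relations. -/
def RCC8.holds : RCC8 → Region → Region → Prop
  | .DC,    a, b => a.val ∩ b.val = ∅
  | .EC,    a, b => (a.val ∩ b.val).Nonempty ∧ interior a.val ∩ interior b.val = ∅
  | .PO,    a, b => ¬ a.val ⊆ b.val ∧ ¬ b.val ⊆ a.val ∧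
      (interior a.val ∩ interior b.val).Nonempty
  | .TPP,   a, b => a.val ⊆ b.val ∧ a.val ≠ b.val ∧ ¬ a.val ⊆ interior b.val
  | .NTPP,  a, b => a.val ⊆ interior b.val
  | .EQ,    a, b => a.val = b.val
  | .TPPi,  a, b => b.val ⊆ a.val ∧ b.val ≠ a.val ∧ ¬ b.val ⊆ interior a.val
  | .NTPPi, a, b => b.val ⊆ interior a.val

theorem not_subset_interior_of_isClosed {X : Type*} [TopologicalSpace X] [PreconnectedSpace X]
    {s : Set X} (hs : IsClosed s) (hne : s.Nonempty) (huniv : s ≠ Set.univ) :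
    ¬ s ⊆ interior s := fun h =>
  huniv (IsClopen.eq_univ ⟨hs, subset_interior_iff_isOpen.1 h⟩ hne)

namespace Region

theorem interior_nonempty (a : Region) : (interior a.val).Nonempty := by
  obtain ⟨hne, -, hreg⟩ := a.2
  rw [hreg] at hne
  exact closure_nonempty_iff.1 hne

theorem not_subset_interior (a : Region) : ¬ a.val ⊆ interior a.val := by
  obtain ⟨hne, hbdd, hreg⟩ := a.2
  refine not_subset_interior_of_isClosed (hreg ▸ isClosed_closure) hne fun huniv => ?_
  exact NormedSpace.unbounded_univ ℝ (ℝ × ℝ) (huniv ▸ hbdd)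

theorem interior_inter_nonempty_of_subset {a b : Region} (h : a.val ⊆ b.val) :
    (interior a.val ∩ interior b.val).Nonempty :=
  let ⟨x, hx⟩ := a.interior_nonempty
  ⟨x, hx, interior_mono h hx⟩

theorem not_subset_of_subset_interior {a b : Region} (h : a.val ⊆ interior b.val) :
    ¬ b.val ⊆ a.val := fun hba =>
  b.not_subset_interior (hba.trans h)

end Region

namespace RCC8

theorem exists_holds (a b : Region) : ∃ r : RCC8, r.holds a b := by
  by_cases hdc : a.val ∩ b.val = ∅
  · exact ⟨DC, hdc⟩
  by_cases hec : interior a.val ∩ interior b.val = ∅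
  · exact ⟨EC, Set.nonempty_iff_ne_empty.2 hdc, hec⟩
  by_cases hab : a.val ⊆ b.val <;> by_cases hba : b.val ⊆ a.val
  · exact ⟨EQ, hab.antisymm hba⟩
  · by_cases hint : a.val ⊆ interior b.val
    · exact ⟨NTPP, hint⟩
    · exact ⟨TPP, hab, fun h => hba h.ge, hint⟩
  · by_cases hint : b.val ⊆ interior a.val
    · exact ⟨NTPPi, hint⟩
    · exact ⟨TPPi, hba, fun h => hab h.ge, hint⟩
  · exact ⟨PO, hab, hba, Set.nonempty_iff_ne_empty.2 hec⟩

theorem eq_of_holds {a b : Region} {r s : RCC8} (hr : r.holds a b) (hs : s.holds a b) :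
    r = s := by
  have hmeet_ab := @Region.interior_inter_nonempty_of_subset a b
  have hmeet_ba : b.val ⊆ a.val → (interior a.val ∩ interior b.val).Nonempty := fun h =>
    Set.inter_comm (interior b.val) _ ▸ Region.interior_inter_nonempty_of_subset h
  have hntpp := @Region.not_subset_of_subset_interior a b
  have hntppi := @Region.not_subset_of_subset_interior b a
  have hinter : (interior a.val ∩ interior b.val).Nonempty → (a.val ∩ b.val).Nonempty :=
    Set.Nonempty.mono (Set.inter_subset_inter interior_subset interior_subset)
  have hntpp_sub : a.val ⊆ interior b.val → a.val ⊆ b.val := fun h => h.trans interior_subset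
  have hntppi_sub : b.val ⊆ interior a.val → b.val ⊆ a.val := fun h => h.trans interior_subset
  have hdc := (Set.not_nonempty_iff_eq_empty (s := a.val ∩ b.val)).symm
  have hec := (Set.not_nonempty_iff_eq_empty (s := interior a.val ∩ interior b.val)).symm
  have heq := Set.Subset.antisymm_iff (a := a.val) (b := b.val)
  cases r <;> cases s <;> simp only [holds, hdc, hec, heq] at hr hs ⊢ <;> grind

end RCC8

/-- the 8 basic RCC-8 relations are jointly exhaustive and
pairwise disjoint: exactly one of them holds between any two regions. -/
theorem rcc8_JEPD (a b : Region) : ∃! r : RCC8, r.holds a b :=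
  let ⟨r, hr⟩ := RCC8.exists_holds a b
  ⟨r, hr, fun _ hs => RCC8.eq_of_holds hs hr⟩
end
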